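/- arXiv:2104.04185 — 3 statements merged into one kernel-verified Lean document; each statement's English description precedes it below -/
import Mathlib

section
/- Let R be a (left) Noetherian ring and A an R-module. If B is a submodule of A such that B has the finite generator property with bound r (every finitely generated submodule of B needs at most r generators) and A/B has the finite generator property with bound t, then A has the finite generator property with bound r + t. -/
/-- `B` can be generated by at most `n` elements. -/
def genLE (R : Type*) [Ring R] {M : Type*} [AddCommGroup M] [Module R M]
    (B : Submodule R M) (n : ℕ) : Prop :=
  ∃ S : Finset M, S.card ≤ n ∧ Submodule.span R (S : Set M) = B

/-- Every finitely generated submodule of `M` can be generated by at most `r` elements. -/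
def finGenPropLE (R : Type*) [Ring R] (M : Type*) [AddCommGroup M] [Module R M]
    (r : ℕ) : Prop :=
  ∀ B : Submodule R M, B.FG → genLE R B r

theorem stmt1 (R : Type*) [Ring R] [IsNoetherianRing R]
    (M : Type*) [AddCommGroup M] [Module R M] (r t : ℕ) (B : Submodule R M)
    (hB : finGenPropLE R B r) (hQ : finGenPropLE R (M ⧸ B) t) :
    finGenPropLE R M (r + t) := by
  intro C hC
  classical
  -- the image of C in M ⧸ B
  obtain ⟨S₀, hS₀card, hS₀span⟩ := hQ (C.map B.mkQ) (hC.map _)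
  -- C ⊓ B is finitely generated
  have hfgCB : (C ⊓ B).FG := by
    have : IsNoetherian R C := isNoetherian_of_fg_of_noetherian C hC
    have h1 : ((C ⊓ B).comap C.subtype).FG := IsNoetherian.noetherian _
    have h2 := h1.map C.subtype
    rwa [Submodule.map_comap_subtype, inf_eq_right.mpr inf_le_left] at h2
  -- transfer C ⊓ B to a submodule of B
  set D : Submodule R B := (C ⊓ B).comap B.subtype with hD
  have hDmap : D.map B.subtype = C ⊓ B := by
    rw [hD, Submodule.map_comap_subtype, inf_eq_right.mpr inf_le_right]
  have hDfg : D.FG := by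
    apply Submodule.fg_of_fg_map_injective B.subtype (Submodule.injective_subtype B)
    rwa [hDmap]
  obtain ⟨T₀, hT₀card, hT₀span⟩ := hB D hDfg
  -- lift generators of the image
  have hlift : ∀ s ∈ S₀, ∃ x, x ∈ C ∧ B.mkQ x = s := by
    intro s hs
    have : s ∈ C.map B.mkQ := by rw [← hS₀span]; exact Submodule.subset_span hs
    obtain ⟨x, hx, hx'⟩ := this
    exact ⟨x, hx, hx'⟩
  choose! g hg1 hg2 using hlift
  set S : Finset M := S₀.image g with hS
  set T : Finset M := T₀.image Subtype.val with hT
  refine ⟨S ∪ T, ?_, ?_⟩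
  · calc (S ∪ T).card ≤ S.card + T.card := Finset.card_union_le _ _
      _ ≤ S₀.card + T₀.card := by
          exact Nat.add_le_add (Finset.card_image_le) (Finset.card_image_le)
      _ ≤ r + t := by omega
  · -- span of T is C ⊓ B
    have hTspan : Submodule.span R (T : Set M) = C ⊓ B := by
      rw [hT, Finset.coe_image]
      have hval : (Subtype.val '' (T₀ : Set B)) = B.subtype '' (T₀ : Set B) := rfl
      rw [hval, ← Submodule.map_span, hT₀span, hDmap]
    apply le_antisymm
    · rw [Submodule.span_le]
      rintro x hx
      rcases Finset.mem_union.1 hx with h | h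
      · obtain ⟨s, hs, rfl⟩ := Finset.mem_image.1 h
        exact hg1 s hs
      · have : x ∈ Submodule.span R (T : Set M) := Submodule.subset_span h
        rw [hTspan] at this
        exact this.1
    · intro x hx
      have hx' : B.mkQ x ∈ Submodule.span R (S₀ : Set (M ⧸ B)) := by
        rw [hS₀span]; exact ⟨x, hx, rfl⟩
      have himg : (S₀ : Set (M ⧸ B)) ⊆ B.mkQ '' (S : Set M) := by
        intro s hs
        exact ⟨g s, by simpa [hS] using Finset.mem_image_of_mem g hs, hg2 s hs⟩
      have hx'' : B.mkQ x ∈ Submodule.map B.mkQ (Submodule.span R (S : Set M)) := by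
        rw [Submodule.map_span]
        exact Submodule.span_mono himg hx'
      obtain ⟨y, hy, hxy⟩ := hx''
      have hyC : y ∈ C := by
        have : Submodule.span R (S : Set M) ≤ C := by
          rw [Submodule.span_le]
          intro z hz
          obtain ⟨s, hs, rfl⟩ := Finset.mem_image.1 hz
          exact hg1 s hs
        exact this hy
      have hxyB : x - y ∈ B := by
        have h0 : B.mkQ (x - y) = 0 := by rw [map_sub, hxy, sub_self]
        rw [← B.ker_mkQ]
        exact h0
      have hxyT : x - y ∈ Submodule.span R (T : Set M) := by
        rw [hTspan]; exact ⟨C.sub_mem hx hyC, hxyB⟩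
      have hyS : y ∈ Submodule.span R ((S ∪ T : Finset M) : Set M) :=
        Submodule.span_mono (by simp [Finset.coe_union]) hy
      have hxyT' : x - y ∈ Submodule.span R ((S ∪ T : Finset M) : Set M) :=
        Submodule.span_mono (by simp [Finset.coe_union]) hxyT
      have := Submodule.add_mem _ hxyT' hyS
      simpa using this
end

section
/- Let R be a ring and A = A_1 ⊕ ... ⊕ A_n a finite direct sum of simple R-submodules. If the left annihilators Ann_R(A_1), ..., Ann_R(A_n) are pairwise distinct, then A is a cyclic R-module; in fact A is generated by a_1 + ... + a_n for any choice of nonzero elements a_j ∈ A_j. -/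
/-!
Distinct annihilators make the simple summands `A j` pairwise non-isomorphic, so each `A j` is a
whole isotypic component of `M` and in particular fully invariant. Projecting `M` onto a complement
of `N = R (∑ aⱼ)` then shows `N = ⨆ j, N ⊓ A j`. If some `N ⊓ A j` were `⊥`, `N` would lie in
`⨆ i ≠ j, A i`, and so would `aⱼ = ∑ aᵢ - ∑_{i ≠ j} aᵢ`, forcing `aⱼ = 0`; hence every `A j ≤ N`.
-/

section

variable {R M : Type*} [Ring R] [AddCommGroup M] [Module R M]

theorem nonempty_linearEquiv_of_isotypicComponent_eq {S T : Submodule R M}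
    [IsSimpleModule R S] [IsSimpleModule R T]
    (h : isotypicComponent R M S = isotypicComponent R M T) : Nonempty (S ≃ₗ[R] T) :=
  isIsotypicOfType_submodule_iff.mp (IsIsotypicOfType.isotypicComponent R M T) S
    (h ▸ S.le_isotypicComponent)

theorem isotypicComponent_eq_of_iSup_eq_top {ι : Type*} {A : ι → Submodule R M}
    [∀ i, IsSimpleModule R (A i)] (htop : ⨆ i, A i = ⊤)
    (hiso : Pairwise fun i j ↦ IsEmpty (A i ≃ₗ[R] A j)) (j : ι) :
    isotypicComponent R M (A j) = A j := by
  set c := fun i ↦ isotypicComponent R M (A i)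
  have hc_mem (i : ι) : c i ∈ isotypicComponents R M := ⟨A i, inferInstance, rfl⟩
  have hc_ne {i : ι} (hij : i ≠ j) : c i ≠ c j := fun h ↦
    (hiso hij).false (nonempty_linearEquiv_of_isotypicComponent_eq h).some
  have hdisj : Disjoint (c j) (⨆ (i) (_ : i ≠ j), A i) :=
    (sSupIndep_isotypicComponents R M (hc_mem j)).mono_right <| iSup₂_le fun i hij ↦
      (A i).le_isotypicComponent.trans <| le_sSup (show c i ∈ _ \ {c j} from ⟨hc_mem i, hc_ne hij⟩)
  -- modular law: `A j ≤ c j` are both complements of `⨆ i ≠ j, A i`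
  refine (eq_of_le_of_inf_le_of_sup_le (z := ⨆ (i) (_ : i ≠ j), A i)
    (A j).le_isotypicComponent ?_ ?_).symm
  · rw [hdisj.eq_bot]
    exact bot_le
  · rw [← iSup_split_single, htop]
    exact le_top

theorem Submodule.eq_iSup_inf_of_isFullyInvariant [IsSemisimpleModule R M] {ι : Type*}
    {A : ι → Submodule R M} (hA : ∀ i, (A i).IsFullyInvariant) (htop : ⨆ i, A i = ⊤)
    (N : Submodule R M) : N = ⨆ i, N ⊓ A i := by
  refine le_antisymm ?_ (iSup_le fun i ↦ inf_le_left)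
  obtain ⟨N', hN'⟩ := ComplementedLattice.exists_isCompl N
  set π := N.projection N' hN'
  have hrange : LinearMap.range π = N := Submodule.range_projection hN'
  calc N = (⨆ i, A i).map π := by rw [htop, Submodule.map_top, hrange]
    _ = ⨆ i, (A i).map π := Submodule.map_iSup π A
    _ ≤ ⨆ i, N ⊓ A i := iSup_mono fun i ↦
      le_inf (hrange ▸ LinearMap.map_le_range) (Submodule.map_le_iff_le_comap.mpr (hA i π))

theorem span_sum_eq_top_of_isFullyInvariant [IsSemisimpleModule R M] {ι : Type*} [Fintype ι]
    {A : ι → Submodule R M} [∀ i, IsSimpleModule R (A i)] (hind : iSupIndep A)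
    (hA : ∀ i, (A i).IsFullyInvariant) (htop : ⨆ i, A i = ⊤) {a : ι → M}
    (ha : ∀ i, a i ∈ A i) (ha0 : ∀ i, a i ≠ 0) : Submodule.span R {∑ i, a i} = ⊤ := by
  classical
  set N := Submodule.span R {∑ i, a i}
  refine top_unique (htop ▸ iSup_le fun j ↦ ?_)
  have hatom : IsAtom (A j) := isSimpleModule_iff_isAtom.mp inferInstance
  suffices N ⊓ A j ≠ ⊥ from inf_eq_right.mp ((hatom.le_iff.mp inf_le_right).resolve_left this)
  intro hbot
  have hN : N ≤ ⨆ (i) (_ : i ≠ j), A i := by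
    rw [N.eq_iSup_inf_of_isFullyInvariant hA htop]
    refine iSup_le fun i ↦ ?_
    by_cases hij : i = j
    · rw [hij, hbot]
      exact bot_le
    · exact inf_le_right.trans (le_biSup A hij)
  have hrest : ∑ i ∈ Finset.univ.erase j, a i ∈ ⨆ (i) (_ : i ≠ j), A i :=
    Submodule.sum_mem _ fun i hi ↦ le_biSup A (Finset.ne_of_mem_erase hi) (ha i)
  have hj : a j ∈ ⨆ (i) (_ : i ≠ j), A i := by
    have hsum := hN (Submodule.mem_span_singleton_self (∑ i, a i))
    rw [← Finset.add_sum_erase _ _ (Finset.mem_univ j)] at hsum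
    simpa using Submodule.sub_mem _ hsum hrest
  exact ha0 j (Submodule.disjoint_def.mp (hind j) _ (ha j) hj)

end

theorem stmt2 (R : Type*) [Ring R] (M : Type*) [AddCommGroup M] [Module R M]
    (n : ℕ) (A : Fin n → Submodule R M)
    (hsimple : ∀ j, IsSimpleModule R (A j))
    (hindep : iSupIndep A) (hsup : ⨆ j, A j = ⊤)
    (hann : ∀ i j : Fin n, i ≠ j →
      Module.annihilator R (A i) ≠ Module.annihilator R (A j)) :
    (∃ a : M, Submodule.span R {a} = ⊤) ∧
    ∀ a : Fin n → M, (∀ j, a j ∈ A j) → (∀ j, a j ≠ 0) →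
      Submodule.span R {∑ j, a j} = ⊤ := by
  have := hsimple
  have : IsSemisimpleModule R M :=
    isSemisimpleModule_of_isSemisimpleModule_submodule' (fun _ ↦ inferInstance) hsup
  have hiso : Pairwise fun i j ↦ IsEmpty (A i ≃ₗ[R] A j) :=
    fun i j hij ↦ ⟨fun e ↦ hann i j hij e.annihilator_eq⟩
  have hinv (j : Fin n) : (A j).IsFullyInvariant :=
    isotypicComponent_eq_of_iSup_eq_top hsup hiso j ▸ .isotypicComponent R M (A j)
  have hspan (a : Fin n → M) (ha : ∀ j, a j ∈ A j) (ha0 : ∀ j, a j ≠ 0) :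
      Submodule.span R {∑ j, a j} = ⊤ :=
    span_sum_eq_top_of_isFullyInvariant hindep hinv hsup ha ha0
  refine ⟨?_, hspan⟩
  choose a ha ha0 using fun j ↦
    Submodule.exists_mem_ne_zero_of_ne_bot (isSimpleModule_iff_isAtom.mp (hsimple j)).1
  exact ⟨_, hspan a ha ha0⟩
end

section
/- Let F be a field, G a finite group, and A an FG-module with the finite r-generator property. Then A is finite-dimensional over F with dim_F(A) ≤ r·|G|. -/
/-- `M` has the finite `r`-generator property. -/
def finGenProp (R : Type*) [Ring R] (M : Type*) [AddCommGroup M] [Module R M]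
    (r : ℕ) : Prop :=
  (∀ B : Submodule R M, B.FG → genLE R B r) ∧
  (∃ B : Submodule R M, B.FG ∧ ∀ n : ℕ, genLE R B n → r ≤ n)


/-!
If `b` is an `F`-basis of `FG`, then the `FG`-span of a finite set `t` is the `F`-span of `b • t`,
so it has `F`-dimension at most `|G| · |t|`. A finite `F`-linearly independent set `s` lies in its
own `FG`-span, which by hypothesis is generated by at most `r` elements; hence `|s| ≤ r · |G|`.
-/

open Module Submodule Pointwise

section

variable {K S M : Type*} [Field K] [Ring S] [Module K S] [Module.Finite K S]
  [AddCommGroup M] [Module S M] [Module K M] [IsScalarTower K S M]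

theorem exists_finset_span_eq_restrictScalars_span (t : Finset M) :
    ∃ u : Finset M, u.card ≤ finrank K S * t.card ∧
      span K (u : Set M) = (span S (t : Set M)).restrictScalars K := by
  classical
  let b := Module.finBasis K S
  have hb : span K ((Finset.univ.image b : Finset S) : Set S) = ⊤ := by
    simp [Finset.coe_image, b.span_eq]
  refine ⟨Finset.univ.image b • t, ?_, by
    rw [Finset.coe_smul, span_smul_of_span_eq_top hb]⟩
  calc (Finset.univ.image b • t).card ≤ (Finset.univ.image b).card * t.card :=
        Finset.card_smul_le
    _ ≤ finrank K S * t.card := by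
      gcongr
      simpa using Finset.card_image_le (s := Finset.univ) (f := b)

theorem rank_le_mul_finrank_of_forall_fg_genLE {r : ℕ}
    (hr : ∀ B : Submodule S M, B.FG → genLE S B r) :
    Module.rank K M ≤ (r * finrank K S : ℕ) := by
  refine rank_le fun s hs => ?_
  obtain ⟨t, ht, hspan⟩ := hr _ (fg_span s.finite_toSet)
  obtain ⟨u, hu, hu_span⟩ := exists_finset_span_eq_restrictScalars_span (K := K) (S := S) t
  have hs_le : span K (s : Set M) ≤ span K (u : Set M) := by
    rw [hu_span, hspan]
    exact span_le_restrictScalars K S _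
  calc s.card = finrank K (span K (s : Set M)) := (finrank_span_finset_eq_card hs).symm
    _ ≤ finrank K (span K (u : Set M)) := Submodule.finrank_mono hs_le
    _ ≤ u.card := finrank_span_finset_le_card u
    _ ≤ finrank K S * t.card := hu
    _ ≤ r * finrank K S := by rw [mul_comm]; gcongr

end

theorem MonoidAlgebra.finrank_eq_card (K G : Type*) [Ring K] [StrongRankCondition K] [Monoid G]
    [Fintype G] :
    finrank K (MonoidAlgebra K G) = Fintype.card G :=
  finrank_eq_card_basis (MonoidAlgebra.basis G K)

theorem stmt7 (F : Type*) [Field F] (G : Type*) [Group G] [Fintype G]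
    (A : Type*) [AddCommGroup A] [Module (MonoidAlgebra F G) A]
    [Module F A] [IsScalarTower F (MonoidAlgebra F G) A]
    (r : ℕ) (h : finGenProp (MonoidAlgebra F G) A r) :
    FiniteDimensional F A ∧ Module.finrank F A ≤ r * Fintype.card G := by
  have hrank : Module.rank F A ≤ (r * Fintype.card G : ℕ) := by
    simpa only [MonoidAlgebra.finrank_eq_card] using
      rank_le_mul_finrank_of_forall_fg_genLE (K := F) h.1
  exact ⟨Module.rank_lt_aleph0_iff.mp (hrank.trans_lt Cardinal.natCast_lt_aleph0),
    Module.finrank_le_of_rank_le hrank⟩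
end
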